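/- arXiv:2307.04628 — 2 statements merged into one kernel-verified Lean document; each statement's English description precedes it below -/
import Mathlib

section
/- Let k, q ∈ ℕ, let H be a k-labeled graph, and let i, a, b, a_1, …, a_q ∈ Fin k with a ≠ b and a, b ∉ {a_1, …, a_q, i}. Assume no operator occurrence on the left-hand side is useless. Then θ_i(ρ_{a_1→i}(⋯ ρ_{a_q→i}(η_{a,b}(H)) ⋯)) = η_{a,b}(θ_i(ρ_{a_1→i}(⋯ ρ_{a_q→i}(H) ⋯))) as k-labeled graphs, up to label-preserving isomorphism. -/
/-! ### `k`-labeled graphs and the basic operations on them -/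

/-- A `k`-labeled graph: a simple graph together with a labeling of its vertices
by labels from `Fin k`. -/
structure LGraph (k : ℕ) where
  V : Type
  G : SimpleGraph V
  lab : V → Fin k

namespace LGraph

variable {k : ℕ}

/-- The join operation `η_{a,b}`: add all edges between vertices of label `a`
and vertices of label `b`. -/
def join (a b : Fin k) (H : LGraph k) : LGraph k where
  V := H.V
  G :=
    { Adj := fun u v =>
        H.G.Adj u v ∨ (u ≠ v ∧ ((H.lab u = a ∧ H.lab v = b) ∨ (H.lab u = b ∧ H.lab v = a)))
      symm := by
        constructor
        intro u v h
        rcases h with h | ⟨hne, h⟩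
        · exact Or.inl (H.G.symm.symm _ _ h)
        · refine Or.inr ⟨hne.symm, ?_⟩
          rcases h with ⟨h1, h2⟩ | ⟨h1, h2⟩
          · exact Or.inr ⟨h2, h1⟩
          · exact Or.inl ⟨h2, h1⟩
      loopless := by
        constructor
        intro v h
        rcases h with h | ⟨hne, _⟩
        · exact H.G.loopless.irrefl v h
        · exact hne rfl }
  lab := H.lab

/-- The relabel operation `ρ_{a→b}`: every vertex of label `a` gets label `b` instead. -/
def relabel (a b : Fin k) (H : LGraph k) : LGraph k where
  V := H.V
  G := H.G
  lab := fun v => if H.lab v = a then b else H.lab v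

/-- The fuse operation `θ_i`: replace all vertices of label `i` by a single new vertex
(represented by `none`) of label `i` whose neighbourhood is the union of their
neighbourhoods. -/
def fuse (i : Fin k) (H : LGraph k) : LGraph k where
  V := Option {v : H.V // H.lab v ≠ i}
  G :=
    { Adj := fun x y =>
        match x, y with
        | some u, some v => H.G.Adj u.1 v.1
        | some u, none => ∃ w, H.lab w = i ∧ H.G.Adj u.1 w
        | none, some v => ∃ w, H.lab w = i ∧ H.G.Adj w v.1
        | none, none => False
      symm := by
        constructor
        rintro (_ | u) (_ | v) h
        · exact h
        · obtain ⟨w, hw, ha⟩ := h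
          exact ⟨w, hw, ha.symm⟩
        · obtain ⟨w, hw, ha⟩ := h
          exact ⟨w, hw, ha.symm⟩
        · exact H.G.symm.symm _ _ h
      loopless := by
        constructor
        rintro (_ | v) h
        · exact h
        · exact H.G.loopless.irrefl v.1 h }
  lab := fun x =>
    match x with
    | some u => H.lab u.1
    | none => i

/-- Disjoint union `H1 ⊕ H2` of two `k`-labeled graphs. -/
def union (H1 H2 : LGraph k) : LGraph k where
  V := H1.V ⊕ H2.V
  G := H1.G ⊕g H2.G
  lab := Sum.elim H1.lab H2.lab

/-- Label-preserving isomorphism of `k`-labeled graphs. -/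
def LIso (H1 H2 : LGraph k) : Prop :=
  ∃ e : H1.G ≃g H2.G, ∀ v, H2.lab (e v) = H1.lab v

/-- The occurrence of the join operator `η_{a,b}` applied to `H` is not useless,
i.e. it creates at least one new edge. -/
def joinUseful (a b : Fin k) (H : LGraph k) : Prop :=
  ∃ u v : H.V, u ≠ v ∧ H.lab u = a ∧ H.lab v = b ∧ ¬ H.G.Adj u v

/-- The occurrence of the fuse operator `θ_i` applied to `H` is not useless,
i.e. `H` has at least two vertices of label `i`. -/
def fuseUseful (i : Fin k) (H : LGraph k) : Prop :=
  ∃ u v : H.V, u ≠ v ∧ H.lab u = i ∧ H.lab v = i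

/-- The occurrence of a relabel operator `ρ_{a→b}` applied to `H` is not useless,
i.e. `H` has a vertex of label `a`. -/
def relabelUseful (a : Fin k) (H : LGraph k) : Prop :=
  ∃ v : H.V, H.lab v = a

/-- `relabelSeq i [a₁, …, a_q] H = ρ_{a₁→i}(⋯(ρ_{a_q→i}(H))⋯)`. -/
def relabelSeq (i : Fin k) : List (Fin k) → LGraph k → LGraph k
  | [], H => H
  | a :: as, H => relabel a i (relabelSeq i as H)

/-- None of the relabel operators in `relabelSeq i as H` is useless (this includes
that none of them has the form `ρ_{a→a}`). -/
def relabelSeqUseful (i : Fin k) : List (Fin k) → LGraph k → Prop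
  | [], _ => True
  | a :: as, H => relabelSeqUseful i as H ∧ a ≠ i ∧ relabelUseful a (relabelSeq i as H)

end LGraph

open LGraph

/-!
The relabelings `ρ_{aⱼ→i}` never touch the labels `a` and `b` and never create them, so they commute
with `η_{a,b}` on the nose. The fuse `θ_i` only merges vertices of label `i`, which the join leaves
untouched, and the new vertex again has label `i`; so `θ_i ∘ η_{a,b}` and `η_{a,b} ∘ θ_i` give the
same graph on the same vertex set.
-/

namespace LGraph

variable {k : ℕ}

lemma relabel_lab_eq_iff {c d a : Fin k} (hc : c ≠ a) (hd : d ≠ a) (H : LGraph k) (v : H.V) :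
    (relabel c d H).lab v = a ↔ H.lab v = a := by
  simp only [relabel]
  split_ifs with h
  · exact iff_of_false hd (h ▸ hc)
  · rfl

lemma relabel_join_comm {a b c d : Fin k} (hca : c ≠ a) (hcb : c ≠ b) (hda : d ≠ a)
    (hdb : d ≠ b) (H : LGraph k) :
    relabel c d (join a b H) = join a b (relabel c d H) := by
  show LGraph.mk _ _ _ = LGraph.mk _ _ _
  congr 1
  ext (u : H.V) (v : H.V)
  simp only [join, relabel_lab_eq_iff hca hda, relabel_lab_eq_iff hcb hdb]
  rfl

lemma relabelSeq_join_comm {i a b : Fin k} {as : List (Fin k)} (ha : a ∉ as ∧ a ≠ i)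
    (hb : b ∉ as ∧ b ≠ i) (H : LGraph k) :
    relabelSeq i as (join a b H) = join a b (relabelSeq i as H) := by
  induction as with
  | nil => rfl
  | cons c as ih =>
    simp only [List.mem_cons, not_or] at ha hb
    rw [relabelSeq, ih ⟨ha.1.2, ha.2⟩ ⟨hb.1.2, hb.2⟩]
    exact relabel_join_comm (Ne.symm ha.1.1) (Ne.symm hb.1.1) (Ne.symm ha.2) (Ne.symm hb.2) _

lemma join_adj_iff_of_lab_ne {a b : Fin k} {H : LGraph k} {u : H.V} (ha : H.lab u ≠ a)
    (hb : H.lab u ≠ b) (v : H.V) : (join a b H).G.Adj u v ↔ H.G.Adj u v := by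
  simp [join, ha, hb]

lemma fuse_join_liso {i a b : Fin k} (hai : a ≠ i) (hbi : b ≠ i) (H : LGraph k) :
    LIso (fuse i (join a b H)) (join a b (fuse i H)) := by
  -- The fused vertex and all vertices merged into it have label `i ∉ {a, b}`, so the join adds
  -- no edge at them on either side.
  have hfused : ∀ y, (join a b (fuse i H)).G.Adj none y ↔ (fuse i (join a b H)).G.Adj none y := by
    refine fun y =>
      (join_adj_iff_of_lab_ne (H := fuse i H) (u := none) hai.symm hbi.symm y).trans ?_
    rcases y with _ | v
    · exact Iff.rfl
    · exact exists_congr fun w => and_congr_right fun hw =>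
        (join_adj_iff_of_lab_ne (hw ▸ hai.symm) (hw ▸ hbi.symm) v.1).symm
  refine ⟨⟨Equiv.refl _, fun {x y : (fuse i H).V} => ?_⟩, fun x => by cases x <;> rfl⟩
  change (join a b (fuse i H)).G.Adj x y ↔ (fuse i (join a b H)).G.Adj x y
  rcases x with _ | u <;> rcases y with _ | v
  · exact hfused none
  · exact hfused (some v)
  · exact ((join a b (fuse i H)).G.adj_comm _ _).trans
      ((hfused (some u)).trans ((fuse i (join a b H)).G.adj_comm _ _))
  · simp [join, fuse, Subtype.ext_iff]

end LGraph

theorem fuse_relabelSeq_join_noSide_general {k : ℕ} (H : LGraph k) (i a b : Fin k)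
    (as : List (Fin k))
    (ha : a ∉ as ∧ a ≠ i) (hb : b ∉ as ∧ b ≠ i) :
    LIso (fuse i (relabelSeq i as (join a b H)))
         (join a b (fuse i (relabelSeq i as H))) := by
  rw [relabelSeq_join_comm ha hb]
  exact fuse_join_liso ha.2 hb.2 _

/-- rule 5: if `a, b ∉ {a₁, …, a_q, i}`, then
`θ_i(ρ_{a₁→i}(⋯ρ_{a_q→i}(η_{a,b}(H))⋯)) = η_{a,b}(θ_i(ρ_{a₁→i}(⋯ρ_{a_q→i}(H)⋯)))`
provided that no operator occurrence on the left-hand side is useless. -/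
theorem fuse_relabelSeq_join_noSide {k : ℕ} (H : LGraph k) (i a b : Fin k)
    (as : List (Fin k)) (hab : a ≠ b)
    (ha : a ∉ as ∧ a ≠ i) (hb : b ∉ as ∧ b ≠ i)
    (hjoin : joinUseful a b H)
    (hseq : relabelSeqUseful i as (join a b H))
    (hfuse : fuseUseful i (relabelSeq i as (join a b H))) :
    LIso (fuse i (relabelSeq i as (join a b H)))
         (join a b (fuse i (relabelSeq i as H))) :=
  fuse_relabelSeq_join_noSide_general H i a b as ha hb
end

section
/- Let k ∈ ℕ, let H be a k-labeled graph, and let i, j, a ∈ Fin k be pairwise distinct. Assume no operator occurrence on the left-hand side is useless. Then η_{i,j}(ρ_{a→i}(H)) = ρ_{a→i}(η_{i,j}(η_{a,j}(H))) as k-labeled graphs, up to label-preserving isomorphism. -/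
open LGraph

/-! Both sides live on the vertex set of `H` with the same labeling, so it suffices to compare
edges. After `ρ_{a→i}` the vertices of label `i` are those of original label `a` or `i`, while the
vertices of label `j` are unchanged because `j ∉ {a, i}`. Hence the `i`–`j` edges added on the left
are exactly the `a`–`j` and `i`–`j` edges added on the right, and the two sides are even equal. -/

namespace LGraph

variable {k : ℕ}

theorem LIso.refl (H : LGraph k) : LIso H H :=
  ⟨SimpleGraph.Iso.refl, fun _ => rfl⟩

theorem relabel_lab_eq_target_iff {a b : Fin k} {H : LGraph k} {v : H.V} :
    (relabel a b H).lab v = b ↔ H.lab v = a ∨ H.lab v = b := by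
  simp only [relabel]
  split_ifs with h <;> simp [h]

theorem relabel_lab_eq_iff_of_ne {a b c : Fin k} {H : LGraph k} {v : H.V}
    (hcb : c ≠ b) (hca : c ≠ a) : (relabel a b H).lab v = c ↔ H.lab v = c := by
  simp only [relabel]
  split_ifs with h
  · simp [h, hcb.symm, hca.symm]
  · rfl

theorem join_relabel_eq {a b c : Fin k} {H : LGraph k} (hbc : b ≠ c) (hca : c ≠ a) :
    join b c (relabel a b H) = relabel a b (join b c (join a c H)) := by
  change LGraph.mk H.V _ _ = LGraph.mk H.V _ _
  congr 1
  ext u v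
  have hb : ∀ w, (relabel a b H).lab w = b ↔ H.lab w = a ∨ H.lab w = b := fun _ =>
    relabel_lab_eq_target_iff
  have hc : ∀ w, (relabel a b H).lab w = c ↔ H.lab w = c := fun _ =>
    relabel_lab_eq_iff_of_ne hbc.symm hca
  change H.G.Adj u v ∨ u ≠ v ∧ ((_ ∧ _) ∨ (_ ∧ _)) ↔
    (H.G.Adj u v ∨ u ≠ v ∧ ((_ ∧ _) ∨ (_ ∧ _))) ∨ u ≠ v ∧ ((_ ∧ _) ∨ (_ ∧ _))
  rw [hb u, hb v, hc u, hc v]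
  tauto

end LGraph

theorem join_relabel_comm_general {k : ℕ} (H : LGraph k) (i j a : Fin k)
    (hij : i ≠ j) (hja : j ≠ a) :
    LIso (join i j (relabel a i H))
         (relabel a i (join i j (join a j H))) :=
  join_relabel_eq hij hja ▸ LIso.refl _

/-- rule 13: for pairwise distinct `i, j, a`,
`η_{i,j}(ρ_{a→i}(H)) = ρ_{a→i}(η_{i,j}(η_{a,j}(H)))` provided that no operator
occurrence on the left-hand side is useless. -/
theorem join_relabel_comm {k : ℕ} (H : LGraph k) (i j a : Fin k)
    (hij : i ≠ j) (hia : i ≠ a) (hja : j ≠ a)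
    (hrel : relabelUseful a H)
    (hjoin : joinUseful i j (relabel a i H)) :
    LIso (join i j (relabel a i H))
         (relabel a i (join i j (join a j H))) :=
  join_relabel_comm_general H i j a hij hja
end
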